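/- Let α² = (√125 + 11)/2 and let μ > α² be real. Then the cubic polynomial p(y) = y³ + y² − μy + μ has three distinct real roots, exactly one of which is negative (and less than −1) and two of which are positive. -/

import Mathlib

/-!
The golden ratio φ separates the two positive roots: with φ² = φ + 1 the cubic takes the value
(5φ + 3 − μ)(φ − 1) at φ, and 5φ + 3 = (√125 + 11)/2, so above that threshold p(φ) < 0.
Together with p(−μ) < 0 < p(−1) and p(1), p(μ) > 0 the intermediate value theorem gives roots in
(−μ, −1), (1, φ) and (φ, μ); being three distinct roots of a monic cubic, they are all its roots.
-/

open Real
open scoped goldenRatio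

lemma cubic_eq_mul_of_roots {R : Type*} [CommRing R] [IsDomain R] {b c d r₁ r₂ r₃ : R}
    (h₁₂ : r₁ ≠ r₂) (h₁₃ : r₁ ≠ r₃) (h₂₃ : r₂ ≠ r₃)
    (hr₁ : r₁ ^ 3 + b * r₁ ^ 2 + c * r₁ + d = 0) (hr₂ : r₂ ^ 3 + b * r₂ ^ 2 + c * r₂ + d = 0)
    (hr₃ : r₃ ^ 3 + b * r₃ ^ 2 + c * r₃ + d = 0) (y : R) :
    y ^ 3 + b * y ^ 2 + c * y + d = (y - r₁) * (y - r₂) * (y - r₃) := by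
  have hq₁₂ : r₁ ^ 2 + r₁ * r₂ + r₂ ^ 2 + b * (r₁ + r₂) + c = 0 :=
    mul_left_cancel₀ (sub_ne_zero.mpr h₁₂) (by linear_combination hr₁ - hr₂)
  have hq₁₃ : r₁ ^ 2 + r₁ * r₃ + r₃ ^ 2 + b * (r₁ + r₃) + c = 0 :=
    mul_left_cancel₀ (sub_ne_zero.mpr h₁₃) (by linear_combination hr₁ - hr₃)
  have hsum : r₁ + r₂ + r₃ + b = 0 :=
    mul_left_cancel₀ (sub_ne_zero.mpr h₂₃) (by linear_combination hq₁₂ - hq₁₃)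
  linear_combination (y - r₁) * (y - r₂) * hsum + (y - r₁) * hq₁₂ + hr₁

def saddleCubic (μ y : ℝ) : ℝ := y ^ 3 + y ^ 2 - μ * y + μ

lemma continuous_saddleCubic (μ : ℝ) : Continuous (saddleCubic μ) := by
  unfold saddleCubic
  fun_prop

lemma saddleCubic_goldenRatio (μ : ℝ) : saddleCubic μ φ = (5 * φ + 3 - μ) * (φ - 1) := by
  unfold saddleCubic
  linear_combination (φ - 3) * goldenRatio_sq

lemma sqrt_125_add_11_div_two : (√125 + 11) / 2 = 5 * φ + 3 := by
  rw [show (125 : ℝ) = 5 ^ 2 * 5 by norm_num, sqrt_mul (by positivity), sqrt_sq (by positivity)]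
  unfold goldenRatio
  ring

/-- For μ > α² = (√125+11)/2, the cubic y³ + y² − μy + μ has three distinct real
roots: exactly one negative (and < −1) and two positive. -/
theorem cubic_roots_above_saddle_node (μ : ℝ)
    (h : (Real.sqrt 125 + 11) / 2 < μ) :
    ∃ y₁ y₂ y₃ : ℝ,
      y₁ ≠ y₂ ∧ y₁ ≠ y₃ ∧ y₂ ≠ y₃ ∧
      y₁^3 + y₁^2 - μ*y₁ + μ = 0 ∧
      y₂^3 + y₂^2 - μ*y₂ + μ = 0 ∧
      y₃^3 + y₃^2 - μ*y₃ + μ = 0 ∧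
      y₁ < -1 ∧ 0 < y₂ ∧ 0 < y₃ ∧
      (∀ y : ℝ, y^3 + y^2 - μ*y + μ = 0 → y = y₁ ∨ y = y₂ ∨ y = y₃) := by
  rw [sqrt_125_add_11_div_two] at h
  have hφ₁ : 1 < φ := one_lt_goldenRatio
  have hp := fun {a b : ℝ} ↦ (continuous_saddleCubic μ).continuousOn (s := Set.Icc a b)
  have hpφ : saddleCubic μ φ < 0 := by
    rw [saddleCubic_goldenRatio]
    exact mul_neg_of_neg_of_pos (by linarith) (by linarith)
  have hp_neg_μ : saddleCubic μ (-μ) < 0 := by unfold saddleCubic; nlinarith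
  have hp_neg_one : 0 < saddleCubic μ (-1) := by unfold saddleCubic; linarith
  have hp_one : 0 < saddleCubic μ 1 := by unfold saddleCubic; linarith
  have hp_μ : 0 < saddleCubic μ μ := by unfold saddleCubic; nlinarith
  obtain ⟨y₁, ⟨-, hy₁⟩, hp₁⟩ :=
    intermediate_value_Ioo (by linarith : -μ ≤ -1) hp ⟨hp_neg_μ, hp_neg_one⟩
  obtain ⟨y₂, ⟨hy₂, hy₂φ⟩, hp₂⟩ := intermediate_value_Ioo' hφ₁.le hp ⟨hpφ, hp_one⟩
  obtain ⟨y₃, ⟨hφy₃, -⟩, hp₃⟩ := intermediate_value_Ioo (by linarith : φ ≤ μ) hp ⟨hpφ, hp_μ⟩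
  unfold saddleCubic at hp₁ hp₂ hp₃
  have h₁₂ : y₁ ≠ y₂ := by linarith
  have h₁₃ : y₁ ≠ y₃ := by linarith
  have h₂₃ : y₂ ≠ y₃ := by linarith
  refine ⟨y₁, y₂, y₃, h₁₂, h₁₃, h₂₃, hp₁, hp₂, hp₃, hy₁, by linarith, by linarith, fun y hy ↦ ?_⟩
  have hfac := cubic_eq_mul_of_roots (b := 1) (c := -μ) (d := μ) h₁₂ h₁₃ h₂₃
    (by linear_combination hp₁) (by linear_combination hp₂) (by linear_combination hp₃) y
  have : (y - y₁) * (y - y₂) * (y - y₃) = 0 := by linear_combination hy - hfac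
  simpa [sub_eq_zero, or_assoc] using this
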